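/- Let Ω ⊂ ℝⁿ be a convex domain with 0 ∈ Ω and Ω = −Ω, and T_Ω := Ω + iℝⁿ. Then for all X, Y ∈ ℝⁿ and all choices of signs, κ_{T_Ω}(0; ±X ± iY) = κ_{T_Ω}(0; X + iY) = κ_{T_Ω}(0; ±Y ± iX). -/

import Mathlib

open Metric Set

/-- The Kobayashi–Royden pseudometric. -/
noncomputable def kobayashiRoyden {n : ℕ} (D : Set (EuclideanSpace ℂ (Fin n)))
    (z X : EuclideanSpace ℂ (Fin n)) : ℝ :=
  sInf {t : ℝ | 0 < t ∧ ∃ f : ℂ → EuclideanSpace ℂ (Fin n),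
    DifferentiableOn ℂ f (ball 0 1) ∧ MapsTo f (ball 0 1) D ∧ f 0 = z ∧ t • deriv f 0 = X}

/-!
Precomposing an analytic disc `f` with the rotation `ζ ↦ ω ζ` multiplies `f'(0)` by `ω`, so
`κ(0; ωV) = κ(0; V)` for `|ω| = 1`. Since `T_Ω` is invariant under coordinatewise conjugation,
`ζ ↦ conj (f (conj ζ))` is again a disc in `T_Ω` through `0`, with derivative `conj f'(0)`, so
`κ(0; X - iY) = κ(0; X + iY)`. Finally `ε₁X + iε₂Y = ε₁ (X + iε₁ε₂Y)` and
`ε₁Y + iε₂X = iε₂ (X - iε₁ε₂Y)`. Both symmetries are proved as equalities of the sets of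
admissible lengths `t`, so the junk value `sInf ∅ = 0` never has to be considered.
-/

open Filter Topology ComplexConjugate

theorem HasDerivAt.semilinear_comp_conj {E F : Type*} [NormedAddCommGroup E] [NormedSpace ℂ E]
    [NormedAddCommGroup F] [NormedSpace ℂ F] (c : E →SL[starRingEnd ℂ] F) {f : ℂ → E} {v : E}
    {x : ℂ} (hf : HasDerivAt f v (conj x)) : HasDerivAt (fun ζ => c (f (conj ζ))) (c v) x := by
  rw [hasDerivAt_iff_tendsto_slope] at hf ⊢
  have hconj : Tendsto conj (𝓝[≠] x) (𝓝[≠] (conj x)) :=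
    Complex.continuous_conj.continuousAt.tendsto.inf
      (tendsto_principal_principal.2 fun ζ hζ => (RingHom.injective _).ne hζ)
  refine ((c.continuous.tendsto v).comp (hf.comp hconj)).congr fun ζ => ?_
  simp [slope_def_module, map_inv₀]

section Euclidean

variable {ι : Type*}

variable (ι) in
noncomputable def euclideanConj [Fintype ι] :
    EuclideanSpace ℂ ι ≃L⋆[ℂ] EuclideanSpace ℂ ι :=
  (PiLp.continuousLinearEquiv 2 ℂ fun _ : ι => ℂ).trans
    ((starL ℂ).trans (PiLp.continuousLinearEquiv 2 ℂ fun _ : ι => ℂ).symm)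

@[simp]
theorem euclideanConj_apply [Fintype ι] (z : EuclideanSpace ℂ ι) (j : ι) :
    euclideanConj ι z j = conj (z j) := rfl

@[simp]
theorem euclideanConj_euclideanConj [Fintype ι] (z : EuclideanSpace ℂ ι) :
    euclideanConj ι (euclideanConj ι z) = z := by
  ext j
  simp

def tubeDomain (Ω : Set (EuclideanSpace ℝ ι)) : Set (EuclideanSpace ℂ ι) :=
  {z | (WithLp.toLp 2 fun j => (z j).re) ∈ Ω}

theorem mapsTo_euclideanConj_tubeDomain [Fintype ι] (Ω : Set (EuclideanSpace ℝ ι)) :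
    MapsTo (euclideanConj ι) (tubeDomain Ω) (tubeDomain Ω) := fun z hz => by
  simpa [tubeDomain] using hz

def complexOfReIm (X Y : EuclideanSpace ℝ ι) : EuclideanSpace ℂ ι :=
  WithLp.toLp 2 fun j => (X j : ℂ) + Complex.I * (Y j : ℂ)

theorem euclideanConj_complexOfReIm [Fintype ι] (X Y : EuclideanSpace ℝ ι) :
    euclideanConj ι (complexOfReIm X Y) = complexOfReIm X (-Y) := by
  ext j
  simp [complexOfReIm, Complex.conj_ofReal]

theorem complexOfReIm_smul_smul (X Y : EuclideanSpace ℝ ι) {ε₁ : ℝ} (hε₁ : ε₁ ^ 2 = 1) (ε₂ : ℝ) :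
    complexOfReIm (ε₁ • X) (ε₂ • Y) = (ε₁ : ℂ) • complexOfReIm X ((ε₁ * ε₂) • Y) := by
  have hε₁' : (ε₁ : ℂ) ^ 2 = 1 := mod_cast hε₁
  ext j
  simp only [complexOfReIm, PiLp.smul_apply, smul_eq_mul]
  push_cast
  linear_combination (-(Complex.I * ε₂ * Y j)) * hε₁'

theorem complexOfReIm_smul_smul_swap (X Y : EuclideanSpace ℝ ι) (ε₁ : ℝ) {ε₂ : ℝ}
    (hε₂ : ε₂ ^ 2 = 1) :
    complexOfReIm (ε₁ • Y) (ε₂ • X) = (Complex.I * ε₂) • complexOfReIm X (-(ε₁ * ε₂) • Y) := by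
  have hε₂' : (ε₂ : ℂ) ^ 2 = 1 := mod_cast hε₂
  ext j
  simp only [complexOfReIm, PiLp.smul_apply, smul_eq_mul]
  push_cast
  linear_combination (-(ε₁ * Y j : ℂ)) * hε₂' + (ε₁ * Y j * ε₂ ^ 2 : ℂ) * Complex.I_sq

end Euclidean

section KobayashiRoyden

variable {n : ℕ} (D : Set (EuclideanSpace ℂ (Fin n)))

def kobayashiRoydenLengths (z X : EuclideanSpace ℂ (Fin n)) : Set ℝ :=
  {t : ℝ | 0 < t ∧ ∃ f : ℂ → EuclideanSpace ℂ (Fin n),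
    DifferentiableOn ℂ f (ball 0 1) ∧ MapsTo f (ball 0 1) D ∧ f 0 = z ∧ t • deriv f 0 = X}

theorem kobayashiRoyden_eq_sInf_lengths (z X : EuclideanSpace ℂ (Fin n)) :
    kobayashiRoyden D z X = sInf (kobayashiRoydenLengths D z X) := rfl

theorem kobayashiRoydenLengths_subset_smul (z V : EuclideanSpace ℂ (Fin n)) {ω : ℂ}
    (hω : ‖ω‖ ≤ 1) : kobayashiRoydenLengths D z V ⊆ kobayashiRoydenLengths D z (ω • V) := by
  rintro t ⟨ht, f, hf, hfD, hf0, hft⟩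
  have hrot : MapsTo (ω * ·) (ball (0 : ℂ) 1) (ball 0 1) := fun ζ hζ => by
    rw [mem_ball_zero_iff, norm_mul] at *
    nlinarith [norm_nonneg ω, norm_nonneg ζ]
  have hderiv : HasDerivAt (fun ζ => f (ω * ζ)) (ω • deriv f 0) 0 := by
    have hf' : HasDerivAt f (deriv f 0) (ω * 0) := by
      rw [mul_zero]
      exact (hf.differentiableAt (ball_mem_nhds 0 one_pos)).hasDerivAt
    exact hf'.scomp 0 ((hasDerivAt_id 0).const_mul ω |>.congr_deriv (mul_one ω))
  refine ⟨ht, fun ζ => f (ω * ζ), hf.comp (differentiableOn_id.const_mul ω) hrot,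
    hfD.comp hrot, by simpa using hf0, ?_⟩
  rw [hderiv.deriv, smul_comm, hft]

theorem kobayashiRoyden_smul_of_norm_eq_one (z V : EuclideanSpace ℂ (Fin n)) {ω : ℂ}
    (hω : ‖ω‖ = 1) : kobayashiRoyden D z (ω • V) = kobayashiRoyden D z V := by
  have hω0 : ω ≠ 0 := norm_ne_zero_iff.1 (by rw [hω]; exact one_ne_zero)
  simp only [kobayashiRoyden_eq_sInf_lengths]
  refine congrArg sInf (Subset.antisymm ?_ (kobayashiRoydenLengths_subset_smul D z V hω.le))
  simpa only [inv_smul_smul₀ hω0] using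
    kobayashiRoydenLengths_subset_smul D z (ω • V) (ω := ω⁻¹) (by simp [hω])

variable {D}

theorem kobayashiRoydenLengths_subset_conj (hD : MapsTo (euclideanConj (Fin n)) D D)
    (z V : EuclideanSpace ℂ (Fin n)) :
    kobayashiRoydenLengths D z V ⊆
      kobayashiRoydenLengths D (euclideanConj _ z) (euclideanConj _ V) := by
  rintro t ⟨ht, f, hf, hfD, hf0, hft⟩
  have hconj : MapsTo conj (ball (0 : ℂ) 1) (ball 0 1) := fun ζ hζ => by
    simpa [mem_ball_zero_iff] using hζ
  have hderiv : ∀ ζ ∈ ball (0 : ℂ) 1, HasDerivAt (fun ζ => euclideanConj _ (f (conj ζ)))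
      (euclideanConj _ (deriv f (conj ζ))) ζ := fun ζ hζ =>
    HasDerivAt.semilinear_comp_conj (euclideanConj (Fin n)).toContinuousLinearMap
      (hf.differentiableAt (isOpen_ball.mem_nhds (hconj hζ))).hasDerivAt
  refine ⟨ht, fun ζ => euclideanConj _ (f (conj ζ)),
    fun ζ hζ => (hderiv ζ hζ).differentiableAt.differentiableWithinAt,
    hD.comp (hfD.comp hconj), by simp [hf0], ?_⟩
  rw [(hderiv 0 (mem_ball_self one_pos)).deriv, map_zero, ← hft]
  ext j
  simp [Complex.conj_ofReal]

theorem kobayashiRoyden_conj (hD : MapsTo (euclideanConj (Fin n)) D D)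
    (z V : EuclideanSpace ℂ (Fin n)) :
    kobayashiRoyden D (euclideanConj _ z) (euclideanConj _ V) = kobayashiRoyden D z V := by
  simp only [kobayashiRoyden_eq_sInf_lengths]
  refine congrArg sInf (Subset.antisymm ?_ (kobayashiRoydenLengths_subset_conj hD z V))
  simpa only [euclideanConj_euclideanConj] using
    kobayashiRoydenLengths_subset_conj hD (euclideanConj _ z) (euclideanConj _ V)

theorem kobayashiRoyden_complexOfReIm_neg (hD : MapsTo (euclideanConj (Fin n)) D D)
    {z : EuclideanSpace ℂ (Fin n)} (hz : euclideanConj _ z = z) (X Y : EuclideanSpace ℝ (Fin n)) :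
    kobayashiRoyden D z (complexOfReIm X (-Y)) = kobayashiRoyden D z (complexOfReIm X Y) := by
  simpa only [hz, euclideanConj_complexOfReIm] using kobayashiRoyden_conj hD z (complexOfReIm X Y)

theorem kobayashiRoyden_complexOfReIm_smul_smul (hD : MapsTo (euclideanConj (Fin n)) D D)
    {z : EuclideanSpace ℂ (Fin n)} (hz : euclideanConj _ z = z) (X Y : EuclideanSpace ℝ (Fin n))
    {ε₁ ε₂ : ℝ} (hε₁ : ε₁ = 1 ∨ ε₁ = -1) (hε₂ : ε₂ = 1 ∨ ε₂ = -1) :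
    kobayashiRoyden D z (complexOfReIm (ε₁ • X) (ε₂ • Y)) =
        kobayashiRoyden D z (complexOfReIm X Y) ∧
      kobayashiRoyden D z (complexOfReIm X Y) =
        kobayashiRoyden D z (complexOfReIm (ε₁ • Y) (ε₂ • X)) := by
  have h_sign : ∀ s : ℝ, (s = 1 ∨ s = -1) →
      kobayashiRoyden D z (complexOfReIm X (s • Y)) = kobayashiRoyden D z (complexOfReIm X Y) := by
    rintro s (rfl | rfl)
    · rw [one_smul]
    · rw [neg_one_smul, kobayashiRoyden_complexOfReIm_neg hD hz]
  have h_sq : ∀ ε : ℝ, (ε = 1 ∨ ε = -1) → ε ^ 2 = 1 := by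
    rintro ε (rfl | rfl) <;> norm_num
  have h_norm : ∀ ε : ℝ, (ε = 1 ∨ ε = -1) → ‖(ε : ℂ)‖ = 1 := by
    rintro ε (rfl | rfl) <;> norm_num
  have h_prod : ε₁ * ε₂ = 1 ∨ ε₁ * ε₂ = -1 := by
    rcases hε₁ with rfl | rfl <;> rcases hε₂ with rfl | rfl <;> norm_num
  have h_neg_prod : -(ε₁ * ε₂) = 1 ∨ -(ε₁ * ε₂) = -1 := by
    rcases h_prod with h | h <;> simp [h]
  constructor
  · rw [complexOfReIm_smul_smul X Y (h_sq ε₁ hε₁),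
      kobayashiRoyden_smul_of_norm_eq_one D z _ (h_norm ε₁ hε₁), h_sign _ h_prod]
  · rw [complexOfReIm_smul_smul_swap X Y ε₁ (h_sq ε₂ hε₂),
      kobayashiRoyden_smul_of_norm_eq_one D z _
        (by rw [norm_mul, Complex.norm_I, h_norm ε₂ hε₂, one_mul]),
      h_sign _ h_neg_prod]

end KobayashiRoyden

theorem stmt9 (n : ℕ) (Ω : Set (EuclideanSpace ℝ (Fin n)))
    (T : Set (EuclideanSpace ℂ (Fin n)))
    (hT : T = {z | (WithLp.toLp 2 (fun j => (z j).re) : EuclideanSpace ℝ (Fin n)) ∈ Ω})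
    (X Y : EuclideanSpace ℝ (Fin n)) :
    ∀ ε₁ ε₂ : ℝ, (ε₁ = 1 ∨ ε₁ = -1) → (ε₂ = 1 ∨ ε₂ = -1) →
      kobayashiRoyden T 0 (WithLp.toLp 2 (fun j => (ε₁ * X j : ℝ) + Complex.I * ((ε₂ * Y j : ℝ) : ℂ)))
        = kobayashiRoyden T 0 (WithLp.toLp 2 (fun j => (X j : ℂ) + Complex.I * (Y j : ℂ))) ∧
      kobayashiRoyden T 0 (WithLp.toLp 2 (fun j => (X j : ℂ) + Complex.I * (Y j : ℂ)))
        = kobayashiRoyden T 0 (WithLp.toLp 2 (fun j => (ε₁ * Y j : ℝ) + Complex.I * ((ε₂ * X j : ℝ) : ℂ))) := by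
  intro ε₁ ε₂ hε₁ hε₂
  subst hT
  exact kobayashiRoyden_complexOfReIm_smul_smul (mapsTo_euclideanConj_tubeDomain Ω) (map_zero _)
    X Y hε₁ hε₂
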